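/- Lemma 6.3 (lower bound for the sound speed). Under the bootstrap assumptions of Proposition 4.1 and the modulation bounds |κ̇| ≤ M, |T*| ≤ 3Mε², for every s ≥ −log ε the self-similar sound speed S = (1/2)(e^{−s/2}W + κ − Z) satisfies ‖S(·,s) − κ₀/2‖_{L∞(X(s))} ≤ ε^{1/8}. In particular S is bounded away from 0 on X(s). -/

import Mathlib

/-!
On `X(s)` with `s ≥ -log ε` the natural length scale `λ = ε^{1/6} e^{s/2}` is at least `1`, and
`X(s)` is the box `|y₁| ≤ 2λ³`, `|y̌| ≤ 2λ`; hence `η ≤ (3λ)⁶` there and the bootstrap bound gives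
`e^{-s/2}|W| ≤ 6ε^{1/6}`. The mean value theorem on `[-ε, T*]` gives `|κ - κ₀| ≤ M(3Mε² + ε)`, and
`|Z| ≤ Mε^{1/2}`. All three errors are `O(M² ε^{1/6})`, which is below `ε^{1/8}` once `ε` is small.
-/

/-- The weight `η(y) = 1 + y₁² + |y̌|⁶`. -/
noncomputable def eta (y : Fin 3 → ℝ) : ℝ := 1 + (y 0)^2 + ((y 1)^2 + (y 2)^2)^3

/-- The support set `X(s) = {|y₁| ≤ 2ε^{1/2}e^{3s/2}, |y̌| ≤ 2ε^{1/6}e^{s/2}}`. -/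
noncomputable def Xs (ε s : ℝ) : Set (Fin 3 → ℝ) :=
  {y | |y 0| ≤ 2 * ε ^ (1/2 : ℝ) * Real.exp (3*s/2) ∧
       Real.sqrt ((y 1)^2 + (y 2)^2) ≤ 2 * ε ^ (1/6 : ℝ) * Real.exp (s/2)}

open Real Set

lemma eta_rpow_le {y : Fin 3 → ℝ} {l : ℝ} (hl : 1 ≤ l) (h0 : |y 0| ≤ 2 * l ^ 3)
    (h12 : √((y 1)^2 + (y 2)^2) ≤ 2 * l) : eta y ^ (1/6 : ℝ) ≤ 3 * l := by
  have hr : 0 ≤ (y 1)^2 + (y 2)^2 := by positivity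
  have hy0 : (y 0)^2 ≤ 4 * l ^ 6 := by
    nlinarith [sq_abs (y 0), abs_nonneg (y 0)]
  have hy12 : ((y 1)^2 + (y 2)^2)^3 ≤ 64 * l ^ 6 := by
    have hsq : (y 1)^2 + (y 2)^2 ≤ 4 * l ^ 2 := by
      nlinarith [sq_sqrt hr, sqrt_nonneg ((y 1)^2 + (y 2)^2)]
    calc ((y 1)^2 + (y 2)^2)^3 ≤ (4 * l ^ 2)^3 := pow_le_pow_left₀ hr hsq 3
      _ = 64 * l ^ 6 := by ring
  have hl6 : 1 ≤ l ^ 6 := one_le_pow₀ hl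
  rw [one_div, rpow_inv_le_iff_of_pos (by unfold eta; positivity) (by positivity) (by norm_num)]
  norm_cast
  unfold eta
  linarith

lemma one_le_rpow_mul_exp {ε s : ℝ} (hε : 0 < ε) (hε1 : ε ≤ 1) (hs : -log ε ≤ s) :
    1 ≤ ε ^ (1/6 : ℝ) * exp (s/2) := by
  have hlog : log ε ≤ 0 := log_nonpos hε.le hε1
  rw [rpow_def_of_pos hε, ← exp_add]
  exact one_le_exp (by linarith)

lemma rpow_half_mul_exp {ε : ℝ} (hε : 0 < ε) (s : ℝ) :
    ε ^ (1/2 : ℝ) * exp (3*s/2) = (ε ^ (1/6 : ℝ) * exp (s/2)) ^ 3 := by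
  rw [rpow_def_of_pos hε, rpow_def_of_pos hε, ← exp_add, ← exp_add, ← exp_nat_mul]
  ring_nf

lemma eta_rpow_le_of_mem_Xs {ε s : ℝ} {y : Fin 3 → ℝ} (hε : 0 < ε) (hε1 : ε ≤ 1)
    (hs : -log ε ≤ s) (hy : y ∈ Xs ε s) :
    eta y ^ (1/6 : ℝ) ≤ 3 * (ε ^ (1/6 : ℝ) * exp (s/2)) := by
  obtain ⟨h0, h12⟩ := hy
  rw [mul_assoc, rpow_half_mul_exp hε] at h0
  rw [mul_assoc] at h12
  exact eta_rpow_le (one_le_rpow_mul_exp hε hε1 hs) h0 h12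

lemma exp_neg_half_mul_abs_le {ε s w : ℝ} {y : Fin 3 → ℝ} (hε : 0 < ε) (hε1 : ε ≤ 1)
    (hs : -log ε ≤ s) (hy : y ∈ Xs ε s) (hw : |w| ≤ 2 * eta y ^ (1/6 : ℝ)) :
    exp (-s/2) * |w| ≤ 6 * ε ^ (1/6 : ℝ) := by
  have hη := eta_rpow_le_of_mem_Xs hε hε1 hs hy
  calc exp (-s/2) * |w| ≤ exp (-s/2) * (6 * (ε ^ (1/6 : ℝ) * exp (s/2))) := by
        gcongr; linarith
    _ = 6 * ε ^ (1/6 : ℝ) * exp (-s/2 + s/2) := by rw [exp_add]; ring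
    _ = 6 * ε ^ (1/6 : ℝ) := by
        rw [show -s/2 + s/2 = (0 : ℝ) by ring, exp_zero, mul_one]

lemma abs_sub_le_of_abs_deriv_le {κ : ℝ → ℝ} {M ε T t : ℝ}
    (hd : ∀ t ∈ Icc (-ε) T, DifferentiableAt ℝ κ t) (hb : ∀ t ∈ Icc (-ε) T, |deriv κ t| ≤ M)
    (hT : |T| ≤ 3 * M * ε^2) (ht : t ∈ Icc (-ε) T) :
    |κ t - κ (-ε)| ≤ M * (3 * M * ε^2 + ε) := by
  have hM : 0 ≤ M := (abs_nonneg _).trans (hb t ht)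
  have hε : -ε ∈ Icc (-ε) T := ⟨le_rfl, ht.1.trans ht.2⟩
  have hmvt := (convex_Icc (-ε) T).norm_image_sub_le_of_norm_deriv_le hd hb hε ht
  rw [Real.norm_eq_abs, Real.norm_eq_abs, abs_of_nonneg (a := t - -ε) (by linarith [ht.1])] at hmvt
  calc |κ t - κ (-ε)| ≤ M * (t - -ε) := hmvt
    _ ≤ M * (3 * M * ε^2 + ε) := by gcongr; linarith [ht.2, le_abs_self T]

lemma sound_speed_error_le {M ε : ℝ} (hM : 1 ≤ M) (hε : 0 < ε) (hε1 : ε ≤ 1) :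
    (6 * ε ^ (1/6 : ℝ) + M * (3 * M * ε^2 + ε) + M * ε ^ (1/2 : ℝ)) / 2
      ≤ 6 * M^2 * ε ^ (1/6 : ℝ) := by
  have h2 : ε^2 ≤ ε := pow_le_of_le_one hε.le hε1 (by norm_num)
  have h1 : ε ≤ ε ^ (1/2 : ℝ) := by
    simpa using rpow_le_rpow_of_exponent_ge hε hε1 (by norm_num : (1/2 : ℝ) ≤ 1)
  have h6 : ε ^ (1/2 : ℝ) ≤ ε ^ (1/6 : ℝ) :=
    rpow_le_rpow_of_exponent_ge hε hε1 (by norm_num)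
  have hM2 : M ≤ M^2 := by nlinarith
  have ha : 0 ≤ ε ^ (1/6 : ℝ) := by positivity
  nlinarith [mul_le_mul_of_nonneg_left (h2.trans (h1.trans h6)) (by positivity : 0 ≤ M^2),
    mul_le_mul_of_nonneg_left (h1.trans h6) (by positivity : 0 ≤ M),
    mul_le_mul_of_nonneg_left h6 (by positivity : 0 ≤ M),
    mul_le_mul_of_nonneg_right hM2 ha, mul_le_mul_of_nonneg_right (hM.trans hM2) ha]

lemma mul_rpow_one_sixth_le_rpow_one_eighth {K ε : ℝ} (hK : 0 < K) (hε : 0 < ε)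
    (hεK : ε < (K⁻¹)^24) : K * ε ^ (1/6 : ℝ) ≤ ε ^ (1/8 : ℝ) := by
  have hroot : ε ^ (1/24 : ℝ) ≤ K⁻¹ := by
    have := rpow_lt_rpow hε.le hεK (by norm_num : (0 : ℝ) < ((24 : ℕ) : ℝ)⁻¹)
    rw [pow_rpow_inv_natCast (by positivity) (by norm_num)] at this
    rw [one_div]
    exact_mod_cast this.le
  calc K * ε ^ (1/6 : ℝ) = (K * ε ^ (1/24 : ℝ)) * ε ^ (1/8 : ℝ) := by
        rw [mul_assoc, ← rpow_add hε]; norm_num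
    _ ≤ ε ^ (1/8 : ℝ) := by
        refine mul_le_of_le_one_left (by positivity) ?_
        calc K * ε ^ (1/24 : ℝ) ≤ K * K⁻¹ := by gcongr
          _ = 1 := mul_inv_cancel₀ hK.ne'

theorem sound_speed_lower_bound_general
    (κ0 : ℝ) :
    ∀ M : ℝ, 1 ≤ M → ∃ ε0 : ℝ, 0 < ε0 ∧ ∀ ε : ℝ, 0 < ε → ε < ε0 →
    ∀ (W Z S : (Fin 3 → ℝ) → ℝ → ℝ) (κ : ℝ → ℝ) (tOf : ℝ → ℝ) (Tstar : ℝ),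
      -- modulation bounds
      κ (-ε) = κ0 →
      (∀ t ∈ Set.Icc (-ε) Tstar, DifferentiableAt ℝ κ t) →
      (∀ t ∈ Set.Icc (-ε) Tstar, |deriv κ t| ≤ M) →
      |Tstar| ≤ 3 * M * ε^2 →
      (∀ s : ℝ, -Real.log ε ≤ s → tOf s ∈ Set.Icc (-ε) Tstar) →
      -- bootstrap assumptions
      (∀ s : ℝ, -Real.log ε ≤ s → ∀ y ∈ Xs ε s,
        |W y s| ≤ 2 * eta y ^ (1/6 : ℝ)) →
      (∀ s : ℝ, -Real.log ε ≤ s → ∀ y ∈ Xs ε s,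
        |Z y s| ≤ M * ε ^ (1/2 : ℝ)) →
      -- the sound speed in self-similar variables
      (∀ (y : Fin 3 → ℝ) (s : ℝ),
        S y s = (1/2) * (Real.exp (-s/2) * W y s + κ (tOf s) - Z y s)) →
      -- conclusion: S stays ε^{1/8}-close to κ₀/2 on X(s)
      ∀ s : ℝ, -Real.log ε ≤ s → ∀ y ∈ Xs ε s,
        |S y s - κ0 / 2| ≤ ε ^ (1/8 : ℝ) := by
  intro M hM
  have hK : 1 ≤ 6 * M^2 := by nlinarith
  refine ⟨((6 * M^2)⁻¹)^24, by positivity, ?_⟩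
  intro ε hε hε0 W Z S κ tOf Tstar hκ0 hκd hκb hT ht hW hZ hS s hs y hy
  have hε1 : ε ≤ 1 := hε0.le.trans (pow_le_one₀ (by positivity) (inv_le_one_of_one_le₀ hK))
  have hWs := exp_neg_half_mul_abs_le hε hε1 hs hy (hW s hs y hy)
  have hκs := hκ0 ▸ abs_sub_le_of_abs_deriv_le hκd hκb hT (ht s hs)
  have hZs := hZ s hs y hy
  calc |S y s - κ0 / 2|
      = |exp (-s/2) * W y s + (κ (tOf s) - κ0) - Z y s| / 2 := by
        rw [hS, ← abs_two, ← abs_div]; ring_nf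
    _ ≤ (exp (-s/2) * |W y s| + |κ (tOf s) - κ0| + |Z y s|) / 2 := by
        gcongr
        calc _ ≤ |exp (-s/2) * W y s| + |κ (tOf s) - κ0| + |Z y s| :=
              (abs_sub _ _).trans (add_le_add_left (abs_add_le _ _) _)
          _ = _ := by rw [abs_mul, abs_of_pos (exp_pos _)]
    _ ≤ (6 * ε ^ (1/6 : ℝ) + M * (3 * M * ε^2 + ε) + M * ε ^ (1/2 : ℝ)) / 2 := by gcongr
    _ ≤ 6 * M^2 * ε ^ (1/6 : ℝ) := sound_speed_error_le hM hε hε1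
    _ ≤ ε ^ (1/8 : ℝ) := mul_rpow_one_sixth_le_rpow_one_eighth (by positivity) hε hε0

theorem sound_speed_lower_bound
    (α κ0 : ℝ) (hα : 0 < α) (hκ0 : 1 < κ0) :
    ∀ M : ℝ, 1 ≤ M → ∃ ε0 : ℝ, 0 < ε0 ∧ ∀ ε : ℝ, 0 < ε → ε < ε0 →
    ∀ (W Z S : (Fin 3 → ℝ) → ℝ → ℝ) (κ : ℝ → ℝ) (tOf : ℝ → ℝ) (Tstar : ℝ),
      -- modulation bounds
      κ (-ε) = κ0 →
      (∀ t ∈ Set.Icc (-ε) Tstar, DifferentiableAt ℝ κ t) →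
      (∀ t ∈ Set.Icc (-ε) Tstar, |deriv κ t| ≤ M) →
      |Tstar| ≤ 3 * M * ε^2 →
      (∀ s : ℝ, -Real.log ε ≤ s → tOf s ∈ Set.Icc (-ε) Tstar) →
      -- bootstrap assumptions
      (∀ s : ℝ, -Real.log ε ≤ s → ∀ y ∈ Xs ε s,
        |W y s| ≤ 2 * eta y ^ (1/6 : ℝ)) →
      (∀ s : ℝ, -Real.log ε ≤ s → ∀ y ∈ Xs ε s,
        |Z y s| ≤ M * ε ^ (1/2 : ℝ)) →
      -- the sound speed in self-similar variables
      (∀ (y : Fin 3 → ℝ) (s : ℝ),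
        S y s = (1/2) * (Real.exp (-s/2) * W y s + κ (tOf s) - Z y s)) →
      -- conclusion: S stays ε^{1/8}-close to κ₀/2 on X(s)
      ∀ s : ℝ, -Real.log ε ≤ s → ∀ y ∈ Xs ε s,
        |S y s - κ0 / 2| ≤ ε ^ (1/8 : ℝ) :=
  sound_speed_lower_bound_general κ0
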